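/- (Existence of the largest species equivalence refining a given partition.) Let R be a reaction network over a species type S and let ≈₀ be any equivalence relation on S. Then there exists a species equivalence ≈* for R with ≈* contained in ≈₀ (i.e., s ≈* s' implies s ≈₀ s') such that every species equivalence ≈ for R contained in ≈₀ is contained in ≈*; in other words, the set of species equivalences refining ≈₀ has a greatest element. -/
import Mathlib


open Classical

noncomputable section

/-- A reaction of a stochastic mass-action network:
reagent multiset, kinetic parameter, product multiset. -/
structure Reaction (S : Type*) where
  reag : Multiset S
  rate : ℝ
  prod : Multiset S

variable {S : Type*}

/-- `classCount sd s σ` is the cumulative multiplicity in `σ` of the species in the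
≈-equivalence class of `s` (every ≈-class is of this form). -/
def classCount (sd : Setoid S) (s : S) (σ : Multiset S) : ℕ :=
  (σ.filter (sd.r s)).card

/-- The multiset lifting `≈ₗ` of an equivalence relation `≈` on species:
two multisets are related iff they have the same cumulative multiplicity
of every ≈-equivalence class. -/
def mlift (sd : Setoid S) (σ σ' : Multiset S) : Prop :=
  ∀ s : S, classCount sd s σ = classCount sd s σ'

/-- Cumulative multiplicity in `σ` of an ≈-equivalence class given as an
element of the quotient. -/
def classCountQ (sd : Setoid S) (H : Quotient sd) (σ : Multiset S) : ℕ :=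
  (σ.filter (fun x => Quotient.mk sd x = H)).card

/-- The multiset lifting is itself an equivalence relation on multisets. -/
def mliftSetoid (sd : Setoid S) : Setoid (Multiset S) :=
  ⟨mlift sd, ⟨fun _ _ => rfl, fun h s => (h s).symm, fun h1 h2 s => (h1 s).trans (h2 s)⟩⟩

/-- The set of reagent multisets of a reaction network. -/
def Reags (R : Finset (Reaction S)) : Finset (Multiset S) := R.image Reaction.reag

/-- The set of product multisets of a reaction network. -/
def Prods (R : Finset (Reaction S)) : Finset (Multiset S) := R.image Reaction.prod

/-- Sum of the kinetic parameters of all reactions with reagents `ρ` and products `π`. -/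
def rrOff (R : Finset (Reaction S)) (ρ π : Multiset S) : ℝ :=
  ∑ x ∈ R.filter (fun x => x.reag = ρ ∧ x.prod = π), x.rate

/-- The reaction rate `rr(ρ,π)`: the sum of the kinetic parameters of the reactions from
`ρ` to `π` when `ρ ≠ π`, with diagonal correction `rr(ρ,ρ) = -∑_{π' ∈ Prod(R), π' ≠ ρ} rr(ρ,π')`. -/
def rr (R : Finset (Reaction S)) (ρ π : Multiset S) : ℝ :=
  if ρ = π then -∑ π' ∈ (Prods R).erase ρ, rrOff R ρ π'
  else rrOff R ρ π

/-- Cumulative reaction rate `rr[ρ,B] = ∑_{π ∈ B ∩ (Prod(R) ∪ {ρ})} rr(ρ,π)`. -/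
def rrSet (R : Finset (Reaction S)) (ρ : Multiset S) (B : Set (Multiset S)) : ℝ :=
  ∑ π ∈ (insert ρ (Prods R)).filter (· ∈ B), rr R ρ π

/-- Mass-action propensity of a reaction in state `σ`. -/
def propensity (σ : Multiset S) (x : Reaction S) : ℝ :=
  x.rate * ∏ s ∈ x.reag.toFinset, ((σ.count s).choose (x.reag.count s) : ℝ)

/-- Sum of the propensities in `σ` of all reactions leading from state `σ` to state `θ`. -/
def qOff (R : Finset (Reaction S)) (σ θ : Multiset S) : ℝ :=
  ∑ x ∈ R.filter (fun x => x.reag ≤ σ ∧ σ - x.reag + x.prod = θ), propensity σ x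

/-- The (finitely many) states reachable from `σ` in one reaction. -/
def succs (R : Finset (Reaction S)) (σ : Multiset S) : Finset (Multiset S) :=
  (R.filter (fun x => x.reag ≤ σ)).image (fun x => σ - x.reag + x.prod)

/-- CTMC transition rate `q(σ,θ)` of the Markov chain of the network, with the
convention `q(σ,σ) = -∑_{θ ≠ σ} q(σ,θ)`. -/
def q (R : Finset (Reaction S)) (σ θ : Multiset S) : ℝ :=
  if σ = θ then -∑ θ' ∈ (succs R σ).erase σ, qOff R σ θ'
  else qOff R σ θ

/-- Aggregate transition rate `q[σ,B] = ∑_{θ ∈ B} q(σ,θ)` (finitely many nonzero terms). -/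
def qSet (R : Finset (Reaction S)) (σ : Multiset S) (B : Set (Multiset S)) : ℝ :=
  ∑ θ ∈ (insert σ (succs R σ)).filter (· ∈ B), q R σ θ

/-- All kinetic parameters of the network are positive. -/
def posRates (R : Finset (Reaction S)) : Prop := ∀ x ∈ R, 0 < x.rate

/-- Species equivalence (SE): for all related species `s ≈ s'`, every context `ρ` with
`s+ρ` or `s'+ρ` a reagent multiset of `R`, and every ≈ₗ-class containing at least one
product multiset (represented by `π₀ ∈ Prod(R)`), the cumulative reaction rates agree. -/
def isSE (sd : Setoid S) (R : Finset (Reaction S)) : Prop :=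
  ∀ s s' : S, sd.r s s' → ∀ ρ : Multiset S,
    ((s ::ₘ ρ) ∈ Reags R ∨ (s' ::ₘ ρ) ∈ Reags R) →
    ∀ π₀ ∈ Prods R,
      rrSet R (s ::ₘ ρ) {π | mlift sd π₀ π} = rrSet R (s' ::ₘ ρ) {π | mlift sd π₀ π}

/-- `f` is a representative map for the equivalence `sd`. -/
def IsRep (sd : Setoid S) (f : S → S) : Prop :=
  (∀ s : S, sd.r (f s) s) ∧ ∀ s s' : S, sd.r s s' → f s = f s'

/-- The reduced reaction network of `R` by the representative map `f`: one reaction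
`(ρ̂, β, π̂)` for each pair `(ρ̂, π̂)` with `ρ̂ ∈ Reag(R)`, `f(ρ̂) = ρ̂`, `f(π̂) = π̂` and
`β = ∑ { α | (ρ̂,α,π) ∈ R, f(π) = π̂ }` positive. -/
def reduced (R : Finset (Reaction S)) (f : S → S) : Finset (Reaction S) :=
  ((((R.image (fun x => (x.reag, x.prod.map f))).filter
      (fun p => p.1.map f = p.1)).image
    (fun p => (⟨p.1, ∑ x ∈ R.filter (fun x => x.reag = p.1 ∧ x.prod.map f = p.2), x.rate,
      p.2⟩ : Reaction S)))).filter (fun x => 0 < x.rate)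

/-- SMB-reaction rate: sum of parameters with no diagonal correction. -/
def rrSMBSet (R : Finset (Reaction S)) (ρ : Multiset S) (B : Set (Multiset S)) : ℝ :=
  ∑ π ∈ (Prods R).filter (· ∈ B), rrOff R ρ π

/-- Syntactic Markovian bisimulation. -/
def isSMB (sd : Setoid S) (R : Finset (Reaction S)) : Prop :=
  ∀ s s' : S, sd.r s s' → ∀ ρ π₀ : Multiset S,
    rrSMBSet R (s ::ₘ ρ) {π | mlift sd π₀ π} = rrSMBSet R (s' ::ₘ ρ) {π | mlift sd π₀ π}


section AuxSE

variable {S : Type*}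

/-- Mapping a multiset of species to the multiset of their `sd`-classes. -/
def mmap (sd : Setoid S) : Multiset S → Multiset (Quotient sd) :=
  Multiset.map (Quotient.mk sd)

lemma classCount_eq_count (sd : Setoid S) (s : S) (σ : Multiset S) :
    classCount sd s σ = (mmap sd σ).count (Quotient.mk sd s) := by
  rw [mmap, Multiset.count_map]
  unfold classCount
  congr 1
  apply Multiset.filter_congr
  intro x _
  constructor
  · intro h; exact Quotient.sound h
  · intro h; exact Quotient.exact h

lemma mlift_iff_map_eq (sd : Setoid S) (σ σ' : Multiset S) :
    mlift sd σ σ' ↔ mmap sd σ = mmap sd σ' := by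
  constructor
  · intro h
    refine Multiset.ext.2 fun c => ?_
    induction c using Quotient.ind with
    | _ a =>
      rw [← classCount_eq_count, ← classCount_eq_count]
      exact h a
  · intro h s
    rw [classCount_eq_count, classCount_eq_count, h]

lemma mlift_mono {sd₁ sd₂ : Setoid S} (h : sd₁ ≤ sd₂) {σ σ' : Multiset S}
    (hm : mlift sd₁ σ σ') : mlift sd₂ σ σ' := by
  rw [mlift_iff_map_eq] at hm ⊢
  have hfac : ∀ τ : Multiset S, mmap sd₂ τ
      = (mmap sd₁ τ).map
        (fun c => Quotient.liftOn c (Quotient.mk sd₂)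
          (fun a b hab => Quotient.sound (Setoid.le_def.1 h hab))) := by
    intro τ
    rw [mmap, mmap, Multiset.map_map]
    rfl
  rw [hfac, hfac, hm]

lemma mmap_cons (sd : Setoid S) (s : S) (ρ : Multiset S) :
    mmap sd (s ::ₘ ρ) = Quotient.mk sd s ::ₘ mmap sd ρ := by
  rw [mmap, Multiset.map_cons]

lemma rrOff_of_not_reag {R : Finset (Reaction S)} {ρ : Multiset S} (h : ρ ∉ Reags R)
    (π : Multiset S) : rrOff R ρ π = 0 := by
  unfold rrOff
  have he : R.filter (fun x => x.reag = ρ ∧ x.prod = π) = ∅ := by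
    refine Finset.filter_eq_empty_iff.2 ?_
    intro x hx hp
    exact h (hp.1 ▸ Finset.mem_image_of_mem Reaction.reag hx)
  rw [he, Finset.sum_empty]

lemma rr_of_not_reag {R : Finset (Reaction S)} {ρ : Multiset S} (h : ρ ∉ Reags R)
    (π : Multiset S) : rr R ρ π = 0 := by
  rw [rr]
  split
  · simp [rrOff_of_not_reag h]
  · exact rrOff_of_not_reag h _

lemma rrSet_of_not_reag {R : Finset (Reaction S)} {ρ : Multiset S} (h : ρ ∉ Reags R)
    (B : Set (Multiset S)) : rrSet R ρ B = 0 :=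
  Finset.sum_eq_zero fun π _ => rr_of_not_reag h π

/-- Total outgoing reaction rate into a set `B` (no diagonal correction). -/
def rrTot (R : Finset (Reaction S)) (ρ : Multiset S) (B : Set (Multiset S)) : ℝ :=
  ∑ π ∈ (Prods R).filter (· ∈ B), rrOff R ρ π

/-- Total outgoing reaction rate (no diagonal correction). -/
def rrTotAll (R : Finset (Reaction S)) (ρ : Multiset S) : ℝ :=
  ∑ π ∈ Prods R, rrOff R ρ π

lemma rrSet_eq_rrTot (R : Finset (Reaction S)) (ρ : Multiset S) (B : Set (Multiset S)) :
    rrSet R ρ B = rrTot R ρ B - (if ρ ∈ B then rrTotAll R ρ else 0) := by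
  classical
  have hTu : rrTotAll R ρ = ∑ π ∈ Prods R, rrOff R ρ π := rfl
  unfold rrSet
  by_cases hρ : ρ ∈ B
  · rw [if_pos hρ, Finset.filter_insert, if_pos hρ]
    set F := (Prods R).filter (· ∈ B) with hF
    have hins : insert ρ F = insert ρ (F.erase ρ) := by
      ext x
      simp only [Finset.mem_insert, Finset.mem_erase]
      tauto
    rw [hins, Finset.sum_insert (Finset.notMem_erase _ _)]
    have h1 : rr R ρ ρ = -∑ π' ∈ (Prods R).erase ρ, rrOff R ρ π' := by
      rw [rr, if_pos rfl]
    have h2 : ∑ π ∈ F.erase ρ, rr R ρ π = ∑ π ∈ F.erase ρ, rrOff R ρ π :=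
      Finset.sum_congr rfl fun π hπ => by
        rw [rr, if_neg (Ne.symm (Finset.mem_erase.1 hπ).1)]
    have herase : ∀ s : Finset (Multiset S), ∑ π ∈ s.erase ρ, rrOff R ρ π
        = (∑ π ∈ s, rrOff R ρ π) - (if ρ ∈ s then rrOff R ρ ρ else 0) := by
      intro s
      by_cases hρs : ρ ∈ s
      · rw [if_pos hρs, eq_sub_iff_add_eq, Finset.sum_erase_add _ _ hρs]
      · rw [if_neg hρs, Finset.erase_eq_of_notMem hρs, sub_zero]
    have hiff : (ρ ∈ F) ↔ (ρ ∈ Prods R) := by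
      rw [hF, Finset.mem_filter]
      exact ⟨fun h => h.1, fun h => ⟨h, hρ⟩⟩
    rw [h1, h2, herase (Prods R), herase F, if_congr hiff rfl rfl]
    have hTB : rrTot R ρ B = ∑ π ∈ F, rrOff R ρ π := rfl
    rw [hTB, hTu]
    ring
  · rw [if_neg hρ, sub_zero, Finset.filter_insert, if_neg hρ]
    unfold rrTot
    refine Finset.sum_congr rfl fun π hπ => ?_
    rw [rr, if_neg]
    intro he
    exact hρ (he ▸ (Finset.mem_filter.1 hπ).2)

lemma rrTot_decomp (R : Finset (Reaction S)) (ρ' : Multiset S) (sdi : Setoid S)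
    (B : Set (Multiset S))
    (hB : ∀ π π' : Multiset S, π ∈ B → mmap sdi π = mmap sdi π' → π' ∈ B) :
    rrTot R ρ' B = ∑ c ∈ ((Prods R).filter (· ∈ B)).image (mmap sdi),
      rrTot R ρ' {π | mmap sdi π = c} := by
  classical
  unfold rrTot
  rw [← Finset.sum_fiberwise_of_maps_to
      (t := ((Prods R).filter (· ∈ B)).image (mmap sdi)) (g := mmap sdi)
      (fun x hx => Finset.mem_image_of_mem _ hx) (fun π => rrOff R ρ' π)]
  refine Finset.sum_congr rfl fun c hc => ?_
  congr 1
  obtain ⟨π₁, hπ₁, rfl⟩ := Finset.mem_image.1 hc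
  ext π
  simp only [Finset.mem_filter, Set.mem_setOf_eq]
  constructor
  · rintro ⟨⟨hP, _⟩, hmc⟩
    exact ⟨hP, hmc⟩
  · rintro ⟨hP, hmc⟩
    exact ⟨⟨hP, hB π₁ π (Finset.mem_filter.1 hπ₁).2 hmc.symm⟩, hmc⟩

lemma rrSet_step (R : Finset (Reaction S)) (sdi sd : Setoid S) (hse : isSE sdi R)
    (hle : sdi ≤ sd) (s s' : S) (hss : sdi.r s s') (ρ : Multiset S)
    (π₀ : Multiset S) (hπ₀ : π₀ ∈ Prods R) :
    rrSet R (s ::ₘ ρ) {π | mlift sd π₀ π} = rrSet R (s' ::ₘ ρ) {π | mlift sd π₀ π} := by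
  classical
  by_cases hreag : (s ::ₘ ρ) ∈ Reags R ∨ (s' ::ₘ ρ) ∈ Reags R
  swap
  · push_neg at hreag
    rw [rrSet_of_not_reag hreag.1, rrSet_of_not_reag hreag.2]
  · set B : Set (Multiset S) := {π | mlift sd π₀ π} with hBdef
    have hsd : sd.r s s' := Setoid.le_def.1 hle hss
    have hBclosed : ∀ π π' : Multiset S, π ∈ B → mmap sdi π = mmap sdi π' → π' ∈ B := by
      intro π π' hπ hmm
      have h1 : mlift sdi π π' := (mlift_iff_map_eq sdi π π').2 hmm
      exact fun t => (hπ t).trans (mlift_mono hle h1 t)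
    have hmm12 : mmap sdi (s ::ₘ ρ) = mmap sdi (s' ::ₘ ρ) := by
      rw [mmap_cons, mmap_cons, Quotient.sound hss]
    have hml12 : mlift sd (s ::ₘ ρ) (s' ::ₘ ρ) := by
      rw [mlift_iff_map_eq, mmap_cons, mmap_cons, Quotient.sound hsd]
    have hB12 : (s ::ₘ ρ) ∈ B ↔ (s' ::ₘ ρ) ∈ B := by
      constructor
      · intro h
        exact fun t => (h t).trans (hml12 t)
      · intro h
        exact fun t => (h t).trans ((hml12 t).symm)
    have hclass : ∀ c ∈ (Prods R).image (mmap sdi),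
        rrSet R (s ::ₘ ρ) {π | mmap sdi π = c} = rrSet R (s' ::ₘ ρ) {π | mmap sdi π = c} := by
      intro c hc
      obtain ⟨π₁, hπ₁, rfl⟩ := Finset.mem_image.1 hc
      have hset : {π : Multiset S | mmap sdi π = mmap sdi π₁} = {π | mlift sdi π₁ π} := by
        ext π
        simp only [Set.mem_setOf_eq, mlift_iff_map_eq]
        exact eq_comm
      rw [hset]
      exact hse s s' hss ρ hreag π₁ hπ₁
    have hsub : ((Prods R).filter (· ∈ B)).image (mmap sdi) ⊆ (Prods R).image (mmap sdi) :=
      Finset.image_subset_image (Finset.filter_subset _ _)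
    have hterm : ∀ (τ : Multiset S) (c : Multiset (Quotient sdi)),
        rrTot R τ {π | mmap sdi π = c}
          = rrSet R τ {π | mmap sdi π = c} + (if mmap sdi τ = c then rrTotAll R τ else 0) := by
      intro τ c
      rw [rrSet_eq_rrTot]
      simp only [Set.mem_setOf_eq]
      ring
    have key : ∀ τ : Multiset S,
        rrSet R τ B = (∑ c ∈ ((Prods R).filter (· ∈ B)).image (mmap sdi),
            rrSet R τ {π | mmap sdi π = c})
          + (if mmap sdi τ ∈ ((Prods R).filter (· ∈ B)).image (mmap sdi)
              then rrTotAll R τ else 0)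
          - (if τ ∈ B then rrTotAll R τ else 0) := by
      intro τ
      rw [rrSet_eq_rrTot, rrTot_decomp R τ sdi B hBclosed,
        Finset.sum_congr rfl (fun c _ => hterm τ c), Finset.sum_add_distrib,
        Finset.sum_ite_eq]
    have key2 : ∀ τ : Multiset S, rrTotAll R τ
        = (∑ c ∈ (Prods R).image (mmap sdi), rrSet R τ {π | mmap sdi π = c})
          + (if mmap sdi τ ∈ (Prods R).image (mmap sdi) then rrTotAll R τ else 0) := by
      intro τ
      have hdec : rrTotAll R τ
          = ∑ c ∈ (Prods R).image (mmap sdi), rrTot R τ {π | mmap sdi π = c} := by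
        unfold rrTotAll
        rw [← Finset.sum_fiberwise_of_maps_to (t := (Prods R).image (mmap sdi))
            (g := mmap sdi) (fun x hx => Finset.mem_image_of_mem _ hx)
            (fun π => rrOff R τ π)]
        refine Finset.sum_congr rfl fun c hc => ?_
        unfold rrTot
        refine Finset.sum_congr ?_ fun _ _ => rfl
        ext x
        simp only [Finset.mem_filter, Set.mem_setOf_eq]
      calc rrTotAll R τ
          = ∑ c ∈ (Prods R).image (mmap sdi), rrTot R τ {π | mmap sdi π = c} := hdec
        _ = ∑ c ∈ (Prods R).image (mmap sdi),
              (rrSet R τ {π | mmap sdi π = c} + if mmap sdi τ = c then rrTotAll R τ else 0) :=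
            Finset.sum_congr rfl (fun c _ => hterm τ c)
        _ = _ := by rw [Finset.sum_add_distrib, Finset.sum_ite_eq]
    have hCBiff : (mmap sdi (s ::ₘ ρ) ∈ ((Prods R).filter (· ∈ B)).image (mmap sdi))
        ↔ ((s ::ₘ ρ) ∈ B ∧ mmap sdi (s ::ₘ ρ) ∈ (Prods R).image (mmap sdi)) := by
      constructor
      · intro h
        obtain ⟨π₁, hπ₁, he⟩ := Finset.mem_image.1 h
        exact ⟨hBclosed π₁ (s ::ₘ ρ) (Finset.mem_filter.1 hπ₁).2 he, hsub h⟩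
      · rintro ⟨hb, hu⟩
        obtain ⟨π₁, hπ₁, he⟩ := Finset.mem_image.1 hu
        exact Finset.mem_image.2
          ⟨π₁, Finset.mem_filter.2 ⟨hπ₁, hBclosed (s ::ₘ ρ) π₁ hb he.symm⟩, he⟩
    have hsumeq : ∑ c ∈ ((Prods R).filter (· ∈ B)).image (mmap sdi),
          rrSet R (s ::ₘ ρ) {π | mmap sdi π = c}
        = ∑ c ∈ ((Prods R).filter (· ∈ B)).image (mmap sdi),
          rrSet R (s' ::ₘ ρ) {π | mmap sdi π = c} :=
      Finset.sum_congr rfl fun c hc => hclass c (hsub hc)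
    rw [key (s ::ₘ ρ), key (s' ::ₘ ρ), hsumeq, ← hmm12]
    by_cases hu : mmap sdi (s ::ₘ ρ) ∈ (Prods R).image (mmap sdi)
    · by_cases hb : (s ::ₘ ρ) ∈ B
      · simp only [if_pos (hCBiff.2 ⟨hb, hu⟩), if_pos hb, if_pos (hB12.1 hb)]
        ring
      · have h1 : mmap sdi (s ::ₘ ρ) ∉ ((Prods R).filter (· ∈ B)).image (mmap sdi) :=
          fun h => hb (hCBiff.1 h).1
        simp only [if_neg h1, if_neg hb, if_neg (fun h => hb (hB12.2 h))]
    · have h1 : mmap sdi (s ::ₘ ρ) ∉ ((Prods R).filter (· ∈ B)).image (mmap sdi) :=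
        fun h => hu (hsub h)
      have hU : rrTotAll R (s ::ₘ ρ) = rrTotAll R (s' ::ₘ ρ) := by
        have k1 := key2 (s ::ₘ ρ)
        have k2 := key2 (s' ::ₘ ρ)
        rw [if_neg hu, add_zero] at k1
        rw [← hmm12, if_neg hu, add_zero] at k2
        rw [k1, k2]
        exact Finset.sum_congr rfl fun c hc => hclass c hc
      simp only [if_neg h1]
      rw [hU]
      simp only [hB12]

end AuxSE

/-- existence of the largest species equivalence refining a given partition:
for any equivalence relation `sd₀` on species there is a species equivalence `sdStar ≤ sd₀`
that contains every species equivalence contained in `sd₀`. -/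
theorem exists_largest_isSE_le (R : Finset (Reaction S)) (hpos : posRates R)
    (sd₀ : Setoid S) :
    ∃ sdStar : Setoid S, isSE sdStar R ∧ sdStar ≤ sd₀ ∧
      ∀ sd : Setoid S, isSE sd R → sd ≤ sd₀ → sd ≤ sdStar := by
  classical
  refine ⟨sSup {sd : Setoid S | isSE sd R ∧ sd ≤ sd₀}, ?_, ?_, ?_⟩
  · have main : ∀ a b : S,
        Relation.EqvGen (fun x y => ∃ r : Setoid S, r ∈ {sd : Setoid S | isSE sd R ∧ sd ≤ sd₀} ∧ r x y) a b →
        ∀ (ρ : Multiset S), ∀ π₀ ∈ Prods R,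
          rrSet R (a ::ₘ ρ) {π | mlift (sSup {sd : Setoid S | isSE sd R ∧ sd ≤ sd₀}) π₀ π}
            = rrSet R (b ::ₘ ρ) {π | mlift (sSup {sd : Setoid S | isSE sd R ∧ sd ≤ sd₀}) π₀ π} := by
      intro a b hab
      induction hab with
      | rel x y hxy =>
        intro ρ π₀ hπ₀
        obtain ⟨r, hrmem, hxy⟩ := hxy
        exact rrSet_step R r _ hrmem.1 (le_sSup hrmem) x y hxy ρ π₀ hπ₀
      | refl x =>
        intro ρ π₀ _
        rfl
      | symm x y _ ih =>
        intro ρ π₀ h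
        exact (ih ρ π₀ h).symm
      | trans x y z _ _ ih1 ih2 =>
        intro ρ π₀ h
        exact (ih1 ρ π₀ h).trans (ih2 ρ π₀ h)
    intro s s' hss ρ _ π₀ hπ₀
    have hss' : Relation.EqvGen
        (fun x y => ∃ r : Setoid S, r ∈ {sd : Setoid S | isSE sd R ∧ sd ≤ sd₀} ∧ r x y) s s' := by
      have h := hss
      rw [Setoid.sSup_eq_eqvGen] at h
      exact h
    exact main s s' hss' ρ π₀ hπ₀
  · exact sSup_le fun sd hsd => hsd.2
  · intro sd h1 h2
    exact le_sSup ⟨h1, h2⟩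

end
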